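/- Two RLFTSs N and N′ are fluid trace equivalent if and only if they are logically equivalent in HML_flt, i.e. N ≡fl N′ iff for every formula Φ of HML_flt and all lists ς over ℝ_{>0} and ϱ over ℝ, ⟦Φ⟧_N(s₀,ς,ϱ) = ⟦Φ⟧_{N′}(s₀′,ς,ϱ). -/

import Mathlib

open scoped BigOperators

/-- A rated labeled fluid transition system (RLFTS) over a type `Act` of actions. -/
structure RLFTS (Act : Type) where
  S : Type
  E : Type
  s0 : S
  src : E → S
  tgt : E → S
  rate : E → ℝ
  label : E → Act
  RP : S → ℝ
  rate_pos : ∀ e, 0 < rate e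
  out_finite : ∀ s : S, {e : E | src e = s}.Finite
  out_nonempty : ∀ s : S, ∃ e : E, src e = s

namespace RLFTS

variable {Act : Type}

/-- Exit rate of a state. -/
noncomputable def RE (N : RLFTS Act) (s : N.S) : ℝ :=
  ∑ᶠ e ∈ {e : N.E | N.src e = s}, N.rate e

/-- Average sojourn time in a state. -/
noncomputable def SJ (N : RLFTS Act) (s : N.S) : ℝ := 1 / N.RE s

/-- Firing probability of an edge. -/
noncomputable def PTe (N : RLFTS Act) (e : N.E) : ℝ := N.rate e / N.RE (N.src e)

/-- `IsPathFrom N M es` : the list of edges `es` is a path starting in the state `M`. -/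
def IsPathFrom (N : RLFTS Act) : N.S → List N.E → Prop
  | _, [] => True
  | M, e :: es => N.src e = M ∧ IsPathFrom N (N.tgt e) es

/-- The list of states visited by a path starting in `M`. -/
def visits (N : RLFTS Act) : N.S → List N.E → List N.S
  | M, [] => [M]
  | M, e :: es => M :: visits N (N.tgt e) es

/-- Execution probability of a path. -/
noncomputable def pathPT (N : RLFTS Act) (es : List N.E) : ℝ := (es.map N.PTe).prod

/-- Cumulative execution probability of the `(σ,ς,ϱ)`-selected paths starting in `M`. -/
noncomputable def PTsel (N : RLFTS Act) (M : N.S) (σ : List Act) (ς ϱ : List ℝ) : ℝ :=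
  ∑ᶠ es ∈ {es : List N.E | IsPathFrom N M es ∧ es.map N.label = σ ∧
      (visits N M es).map N.SJ = ς ∧ (visits N M es).map N.RP = ϱ}, N.pathPT es

end RLFTS

namespace RLFTS

/-- The RLFTSs `N` and `N'` are fluid trace equivalent: the cumulative probabilities of the
`(σ,ς,ϱ)`-selected paths from the initial states coincide for every triple `(σ,ς,ϱ)` of lists
over `Act`, `ℝ_{>0}` and `ℝ`. -/
def FluidTraceEquiv {Act : Type} (N N' : RLFTS Act) : Prop :=
  ∀ (σ : List Act) (ς ϱ : List ℝ), (∀ x ∈ ς, 0 < x) →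
    N.PTsel N.s0 σ ς ϱ = N'.PTsel N'.s0 σ ς ϱ

end RLFTS

/-- Formulas of the fluid modal logic `HML_flt`: `Φ ::= ⊤ | ⟨a⟩Φ`. -/
inductive HMLflt (Act : Type) : Type
  | top : HMLflt Act
  | dia : Act → HMLflt Act → HMLflt Act

open Classical in
/-- Interpretation `⟦Φ⟧(M,ς,ϱ)` of a formula of `HML_flt` at a state `M` of an RLFTS with
a sojourn-time list `ς` and a fluid-rate list `ϱ`. -/
noncomputable def interpFlt {Act : Type} (N : RLFTS Act) :
    HMLflt Act → N.S → List ℝ → List ℝ → ℝ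
  | .top, M, ς, ϱ => if ς = [N.SJ M] ∧ ϱ = [N.RP M] then 1 else 0
  | .dia a Φ, M, s :: ς, r :: ϱ =>
      if N.SJ M = s ∧ N.RP M = r then
        ∑ᶠ e ∈ {e : N.E | N.src e = M ∧ N.label e = a},
          N.PTe e * interpFlt N Φ (N.tgt e) ς ϱ
      else 0
  | .dia _ _, _, _, _ => 0

/-!
The interpretation of `⟨a₁⟩⋯⟨aₙ⟩⊤` obeys exactly the recursion that splitting off the first edge
gives for the cumulative probability of the paths with action sequence `a₁⋯aₙ`; hence
`⟦Φ⟧(M,ς,ϱ) = PT(M,σ,ς,ϱ)` where `σ` is the action sequence of `Φ`. Since every action sequence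
comes from a formula, comparing all formulas is comparing all triples `(σ,ς,ϱ)`.
-/

namespace HMLflt

variable {Act : Type}

def toList : HMLflt Act → List Act
  | .top => []
  | .dia a Φ => a :: toList Φ

def ofList : List Act → HMLflt Act
  | [] => .top
  | a :: σ => .dia a (ofList σ)

theorem toList_ofList (σ : List Act) : (ofList σ).toList = σ := by
  induction σ with
  | nil => rfl
  | cons a σ ih => rw [ofList, toList, ih]

theorem toList_surjective : Function.Surjective (toList : HMLflt Act → List Act) :=
  fun σ => ⟨ofList σ, toList_ofList σ⟩

end HMLflt

theorem finsum_mem_biUnion_image_cons {α M : Type*} [AddCommMonoid M] {C : Set α}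
    {T : α → Set (List α)} (hC : C.Finite) (hT : ∀ a ∈ C, (T a).Finite) (g : List α → M) :
    ∑ᶠ l ∈ ⋃ a ∈ C, (a :: ·) '' T a, g l = ∑ᶠ a ∈ C, ∑ᶠ l ∈ T a, g (a :: l) := by
  have hdisj : C.PairwiseDisjoint fun a => (a :: ·) '' T a := by
    intro a _ b _ hab
    refine Set.disjoint_left.mpr ?_
    rintro _ ⟨l, -, rfl⟩ ⟨l', -, h⟩
    exact hab (List.head_eq_of_cons_eq h).symm
  rw [finsum_mem_biUnion hdisj hC fun a ha => (hT a ha).image _]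
  exact finsum_mem_congr rfl fun a _ => finsum_mem_image List.cons_injective.injOn

namespace RLFTS

variable {Act : Type} (N : RLFTS Act)

theorem pathPT_cons (e : N.E) (es : List N.E) : N.pathPT (e :: es) = N.PTe e * N.pathPT es :=
  List.prod_cons

theorem finite_setOf_isPathFrom_length (n : ℕ) (M : N.S) :
    {es : List N.E | N.IsPathFrom M es ∧ es.length = n}.Finite := by
  induction n generalizing M with
  | zero =>
    refine (Set.finite_singleton []).subset ?_
    rintro es ⟨-, h⟩
    exact List.length_eq_zero_iff.mp h
  | succ n ih =>
    refine ((N.out_finite M).biUnion fun e _ => (ih (N.tgt e)).image (e :: ·)).subset ?_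
    rintro (_ | ⟨e, es⟩) ⟨hpath, hlen⟩
    · simp at hlen
    · exact Set.mem_biUnion hpath.1 ⟨es, ⟨hpath.2, by simpa using hlen⟩, rfl⟩

def selectedPaths (M : N.S) (σ : List Act) (ς ϱ : List ℝ) : Set (List N.E) :=
  {es | N.IsPathFrom M es ∧ es.map N.label = σ ∧
    (N.visits M es).map N.SJ = ς ∧ (N.visits M es).map N.RP = ϱ}

theorem PTsel_eq_finsum (M : N.S) (σ : List Act) (ς ϱ : List ℝ) :
    N.PTsel M σ ς ϱ = ∑ᶠ es ∈ N.selectedPaths M σ ς ϱ, N.pathPT es := rfl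

theorem selectedPaths_finite (M : N.S) (σ : List Act) (ς ϱ : List ℝ) :
    (N.selectedPaths M σ ς ϱ).Finite :=
  (N.finite_setOf_isPathFrom_length σ.length M).subset fun es ⟨hpath, hlabel, _⟩ =>
    ⟨hpath, by rw [← hlabel, List.length_map]⟩

theorem exists_visits_eq_cons (M : N.S) (es : List N.E) : ∃ Ms, N.visits M es = M :: Ms := by
  cases es <;> exact ⟨_, rfl⟩

theorem selectedPaths_nil_sojourn (M : N.S) (σ : List Act) (ϱ : List ℝ) :
    N.selectedPaths M σ [] ϱ = ∅ := by
  refine Set.eq_empty_of_forall_notMem fun es ⟨_, _, hsj, _⟩ => ?_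
  obtain ⟨Ms, hMs⟩ := N.exists_visits_eq_cons M es
  simp [hMs] at hsj

theorem selectedPaths_nil_fluid (M : N.S) (σ : List Act) (ς : List ℝ) :
    N.selectedPaths M σ ς [] = ∅ := by
  refine Set.eq_empty_of_forall_notMem fun es ⟨_, _, _, hrp⟩ => ?_
  obtain ⟨Ms, hMs⟩ := N.exists_visits_eq_cons M es
  simp [hMs] at hrp

theorem selectedPaths_nil (M : N.S) (ς ϱ : List ℝ) :
    N.selectedPaths M [] ς ϱ = {es | es = [] ∧ ς = [N.SJ M] ∧ ϱ = [N.RP M]} := by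
  ext es
  constructor
  · rintro ⟨-, hlabel, hsj, hrp⟩
    obtain rfl := List.map_eq_nil_iff.mp hlabel
    exact ⟨rfl, hsj.symm, hrp.symm⟩
  · rintro ⟨rfl, rfl, rfl⟩
    exact ⟨trivial, rfl, rfl, rfl⟩

theorem selectedPaths_cons (M : N.S) (a : Act) (σ : List Act) {s r : ℝ} (ς ϱ : List ℝ)
    (hsj : N.SJ M = s) (hrp : N.RP M = r) :
    N.selectedPaths M (a :: σ) (s :: ς) (r :: ϱ) =
      ⋃ e ∈ {e | N.src e = M ∧ N.label e = a}, (e :: ·) '' N.selectedPaths (N.tgt e) σ ς ϱ := by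
  subst hsj hrp
  ext es
  simp only [Set.mem_iUnion, Set.mem_image]
  constructor
  · rintro ⟨hpath, hlabel, hsj, hrp⟩
    cases es with
    | nil => simp at hlabel
    | cons e es =>
      simp only [visits, List.map_cons, List.cons.injEq, true_and] at hlabel hsj hrp
      exact ⟨e, ⟨hpath.1, hlabel.1⟩, es, ⟨hpath.2, hlabel.2, hsj, hrp⟩, rfl⟩
  · rintro ⟨e, ⟨hsrc, rfl⟩, es, ⟨hpath, rfl, rfl, rfl⟩, rfl⟩
    exact ⟨⟨hsrc, hpath⟩, rfl, by simp [visits], by simp [visits]⟩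

theorem selectedPaths_cons_eq_empty (M : N.S) (σ : List Act) {s r : ℝ} (ς ϱ : List ℝ)
    (h : ¬(N.SJ M = s ∧ N.RP M = r)) : N.selectedPaths M σ (s :: ς) (r :: ϱ) = ∅ := by
  refine Set.eq_empty_of_forall_notMem fun es ⟨_, _, hsj, hrp⟩ => h ?_
  obtain ⟨Ms, hMs⟩ := N.exists_visits_eq_cons M es
  simp only [hMs, List.map_cons, List.cons.injEq] at hsj hrp
  exact ⟨hsj.1, hrp.1⟩

open Classical in
theorem PTsel_nil (M : N.S) (ς ϱ : List ℝ) :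
    N.PTsel M [] ς ϱ = if ς = [N.SJ M] ∧ ϱ = [N.RP M] then 1 else 0 := by
  rw [PTsel_eq_finsum, selectedPaths_nil]
  split_ifs with h
  · simp [h, pathPT]
  · simp [h]

open Classical in
theorem PTsel_cons (M : N.S) (a : Act) (σ : List Act) (s r : ℝ) (ς ϱ : List ℝ) :
    N.PTsel M (a :: σ) (s :: ς) (r :: ϱ) =
      if N.SJ M = s ∧ N.RP M = r then
        ∑ᶠ e ∈ {e | N.src e = M ∧ N.label e = a}, N.PTe e * N.PTsel (N.tgt e) σ ς ϱ
      else 0 := by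
  rw [PTsel_eq_finsum]
  split_ifs with h
  · rw [N.selectedPaths_cons M a σ ς ϱ h.1 h.2,
      finsum_mem_biUnion_image_cons ((N.out_finite M).subset fun _ he => he.1)
        fun e _ => N.selectedPaths_finite (N.tgt e) σ ς ϱ]
    simp only [pathPT_cons, ← mul_finsum_mem, PTsel_eq_finsum]
  · rw [N.selectedPaths_cons_eq_empty M _ ς ϱ h, finsum_mem_empty]

theorem interpFlt_eq_PTsel (Φ : HMLflt Act) (M : N.S) (ς ϱ : List ℝ) :
    interpFlt N Φ M ς ϱ = N.PTsel M Φ.toList ς ϱ := by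
  induction Φ generalizing M ς ϱ with
  | top => rw [interpFlt, HMLflt.toList, PTsel_nil]
  | dia a Φ ih =>
    rcases ς with _ | ⟨s, ς⟩
    · rw [PTsel_eq_finsum, selectedPaths_nil_sojourn, finsum_mem_empty]
      rfl
    rcases ϱ with _ | ⟨r, ϱ⟩
    · rw [PTsel_eq_finsum, selectedPaths_nil_fluid, finsum_mem_empty]
      rfl
    · simp only [interpFlt, HMLflt.toList, PTsel_cons, ih]

end RLFTS

/-- Logical characterization of fluid trace equivalence: `N ≡fl N'` iff `N` and `N'` satisfy
the same formulas of `HML_flt` with the same interpretation values at their initial states. -/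
theorem RLFTS.fluidTraceEquiv_iff_HMLflt {Act : Type} (N N' : RLFTS Act) :
    RLFTS.FluidTraceEquiv N N' ↔
      ∀ (Φ : HMLflt Act) (ς ϱ : List ℝ), (∀ x ∈ ς, 0 < x) →
        interpFlt N Φ N.s0 ς ϱ = interpFlt N' Φ N'.s0 ς ϱ := by
  simp only [RLFTS.FluidTraceEquiv, RLFTS.interpFlt_eq_PTsel]
  refine ⟨fun h Φ => h Φ.toList, fun h σ => ?_⟩
  obtain ⟨Φ, rfl⟩ := HMLflt.toList_surjective σ
  exact h Φ
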